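/- Let H be a Hopf algebra over k, A a bialgebra, j : H → A and π : A → H bialgebra maps with π∘j = id_H, Π(a) = a₁j(S(π(a₂))), and R = Im Π = A^{co π}. Then Π(j(h)a) = j(h₁) Π(a) j(S(h₂)) for all h ∈ H and a ∈ A, and Π(a j(h)) = Π(a) ε(h) for all a ∈ A, h ∈ H. -/

import Mathlib

open TensorProduct Coalgebra

universe u

/-- The projection `Π = id_A * (j ∘ S ∘ π)`, i.e. `Π(a) = a₁ j(S(π(a₂)))`. -/
noncomputable def PiMap {k H A : Type u} [Field k] [Ring H] [Ring A]
    [HopfAlgebra k H] [Bialgebra k A] (j : H →ₐc[k] A) (π : A →ₐc[k] H) : A →ₗ[k] A :=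
  LinearMap.mul' k A
    ∘ₗ TensorProduct.map LinearMap.id
        ((j : H →ₗ[k] A) ∘ₗ HopfAlgebra.antipode (R := k) ∘ₗ (π : A →ₗ[k] H))
    ∘ₗ (Coalgebra.comul : A →ₗ[k] A ⊗[k] A)

/-! Both identities are instances of `Π(a x) = a₁ Π(x) j(S(π(a₂)))`, which holds because
`j` and `π` are multiplicative and `S` is anti-multiplicative. For `x = j(h)` one has
`Π(j(h)) = j(h₁ S(π(j(h₂)))) = j(h₁ S(h₂)) = ε(h)`, and for `a = j(h)` the factor
`S(π(j(h₂)))` collapses to `S(h₂)`. -/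

open HopfAlgebra

namespace PiMap

variable {k H A : Type u} [Field k] [Ring H] [Ring A] [HopfAlgebra k H] [Bialgebra k A]
  (j : H →ₐc[k] A) (π : A →ₐc[k] H)

lemma apply_repr {a : A} {ι : Type*} (r : Repr k a ι) :
    PiMap j π a = ∑ i ∈ r.index, r.left i * j (antipode k (π (r.right i))) := by
  simp [PiMap, ← r.eq]

lemma mul_apply_repr {a : A} {ι : Type*} (r : Repr k a ι) (x : A) :
    PiMap j π (a * x) =
      ∑ i ∈ r.index, r.left i * PiMap j π x * j (antipode k (π (r.right i))) := by
  simp only [apply_repr j π (r.mul (ℛ k x)), apply_repr j π (ℛ k x), Repr.mul_index,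
    Repr.mul_left, Repr.mul_right, Finset.sum_product, Finset.mul_sum, Finset.sum_mul, map_mul,
    antipode_mul_antidistrib, mul_assoc]

variable {j π}

lemma apply_j (hπj : π.comp j = BialgHom.id k H) (h : H) :
    PiMap j π (j h) = algebraMap k A (counit h) := by
  have hπjh : ∀ x, π (j x) = x := fun x => DFunLike.congr_fun hπj x
  rw [apply_repr j π ((ℛ k h).induced j)]
  simp only [Repr.induced_index, Repr.induced_left, Repr.induced_right, Function.comp_apply,
    hπjh, ← map_mul, ← map_sum, sum_mul_antipode_eq_algebraMap_counit, AlgHomClass.commutes]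

lemma j_mul_apply_repr (hπj : π.comp j = BialgHom.id k H) {h : H} {ι : Type*}
    (r : Repr k h ι) (a : A) :
    PiMap j π (j h * a) =
      ∑ i ∈ r.index, j (r.left i) * PiMap j π a * j (antipode k (r.right i)) := by
  have hπjh : ∀ x, π (j x) = x := fun x => DFunLike.congr_fun hπj x
  simp [mul_apply_repr j π (r.induced j), hπjh]

lemma mul_j_apply (hπj : π.comp j = BialgHom.id k H) (a : A) (h : H) :
    PiMap j π (a * j h) = counit (R := k) h • PiMap j π a := by
  simp only [mul_apply_repr j π (ℛ k a), apply_j hπj, apply_repr j π (ℛ k a),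
    Finset.smul_sum, ← Algebra.commutes, ← Algebra.smul_def, smul_mul_assoc]

end PiMap

theorem stmt_13 {k H A : Type u} [Field k] [Ring H] [Ring A]
    [HopfAlgebra k H] [Bialgebra k A]
    (j : H →ₐc[k] A) (π : A →ₐc[k] H)
    (hπj : π.comp j = BialgHom.id k H) :
    -- `Π(j(h)a) = j(h₁) Π(a) j(S(h₂))` (as linear maps `H ⊗ A → A`):
    (PiMap j π ∘ₗ LinearMap.mul' k A ∘ₗ TensorProduct.map (j : H →ₗ[k] A) LinearMap.id
      = LinearMap.mul' k A
        ∘ₗ (TensorProduct.comm k A A).toLinearMap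
        ∘ₗ TensorProduct.map
            ((j : H →ₗ[k] A) ∘ₗ HopfAlgebra.antipode (R := k))
            (LinearMap.mul' k A ∘ₗ TensorProduct.map (j : H →ₗ[k] A) (PiMap j π))
        ∘ₗ (TensorProduct.assoc k H H A).toLinearMap
        ∘ₗ TensorProduct.map (TensorProduct.comm k H H).toLinearMap LinearMap.id
        ∘ₗ TensorProduct.map (Coalgebra.comul : H →ₗ[k] H ⊗[k] H) LinearMap.id) ∧
    -- `Π(a j(h)) = ε(h) Π(a)` (as linear maps `A ⊗ H → A`):
    (PiMap j π ∘ₗ LinearMap.mul' k A ∘ₗ TensorProduct.map LinearMap.id (j : H →ₗ[k] A)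
      = PiMap j π ∘ₗ (TensorProduct.rid k A).toLinearMap
        ∘ₗ TensorProduct.map LinearMap.id (Coalgebra.counit : H →ₗ[k] k)) := by
  constructor
  · refine TensorProduct.ext' fun h a => ?_
    simp [PiMap.j_mul_apply_repr hπj (ℛ k h), ← (ℛ k h).eq, sum_tmul]
  · refine TensorProduct.ext' fun a h => ?_
    simp [PiMap.mul_j_apply hπj]
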